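/- arXiv:2209.06988 — 3 statements merged into one kernel-verified Lean document; each statement's English description precedes it below -/
import Mathlib

section
/- Suppose a binary complex S_k + S_ℓ (k ≠ ℓ) is in tier 1 along a D-type tier sequence {x_n}, no unary complex S_j in C is in tier 1, and lim_n x_{n,ℓ} = 0. Then a contradiction follows: in fact lim_n x_{n,k} = ∞ and hence the unary complex S_k (i.e., e_k) is also in tier 1. Consequently, if no unary complex is in tier 1 and e_k + e_ℓ ∈ tier 1, then both x_{n,k} and x_{n,ℓ} have positive limits (at least one infinite). -/
open Filter Topology Finset Real
open scoped ENNReal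

/-- The monomial `(x ∨ 1)^y = ∏_i max(x_i,1)^{y_i}` for `x, y ∈ Z_{≥0}^d`. -/
noncomputable def monN {d : ℕ} (x : Fin d → ℕ) (y : Fin d → ℕ) : ℝ :=
  ∏ i, ((max (x i) 1 : ℕ) : ℝ) ^ (y i)

/-- `y` belongs to tier 1 along the sequence `x`: the ratio `(x_n∨1)^y/(x_n∨1)^{y'}`
has a positive limit for all complexes `y' ∈ C`. -/
def Tier1 {d : ℕ} (C : Finset (Fin d → ℕ)) (x : ℕ → Fin d → ℕ) (y : Fin d → ℕ) : Prop :=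
  ∀ y' ∈ C, ∃ L : ℝ≥0∞, 0 < L ∧
    Tendsto (fun n => ENNReal.ofReal (monN (x n) y / monN (x n) y')) atTop (𝓝 L)

/-!
Write `e_i` for the unary complexes. If `x_{n,k} → 0`, then eventually `x_{n,k} = 0`, so the
monomials of `e_k + e_ℓ` and of `e_ℓ` coincide along the sequence and `e_ℓ` would be in tier 1
together with `e_k + e_ℓ`. If both `x_{n,k}` and `x_{n,ℓ}` stay bounded, the monomial of
`e_k + e_ℓ` is bounded, while that of `e_i` for a coordinate `x_{n,i} → ∞` is unbounded; their
ratio then tends to `0`, which tier 1 forbids.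
-/

section Coordinates

variable {α : Type*} {l : Filter α} {u : α → ℕ}

lemma eventually_eq_zero_of_tendsto_natCast_zero
    (h : Tendsto (fun n => (u n : ℝ≥0∞)) l (𝓝 0)) : ∀ᶠ n in l, u n = 0 := by
  filter_upwards [h.eventually (gt_mem_nhds zero_lt_one)] with n hn
  exact Nat.lt_one_iff.mp (by exact_mod_cast hn)

lemma exists_eventually_le_of_tendsto_natCast {a : ℝ≥0∞}
    (h : Tendsto (fun n => (u n : ℝ≥0∞)) l (𝓝 a)) (ha : a ≠ ⊤) :
    ∃ N : ℕ, ∀ᶠ n in l, u n ≤ N := by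
  obtain ⟨N, hN⟩ := ENNReal.exists_nat_gt ha
  exact ⟨N, (h.eventually (gt_mem_nhds hN)).mono fun n hn => by exact_mod_cast hn.le⟩

end Coordinates

section Monomials

variable {d : ℕ}

lemma monN_unary (x : Fin d → ℕ) (i : Fin d) :
    monN x (fun j => if j = i then 1 else 0) = ((max (x i) 1 : ℕ) : ℝ) := by
  rw [monN, Finset.prod_eq_single i (fun j _ hj => by simp [hj]) (by simp)]
  simp

lemma monN_binary (x : Fin d → ℕ) (k l : Fin d) :
    monN x (fun j => (if j = k then 1 else 0) + (if j = l then 1 else 0)) =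
      ((max (x k) 1 : ℕ) : ℝ) * ((max (x l) 1 : ℕ) : ℝ) := by
  simp only [monN, pow_add, Finset.prod_mul_distrib]
  rw [← monN, ← monN, monN_unary, monN_unary]

lemma tendsto_monN_binary_div_unary_zero {α : Type*} {f : Filter α} {x : α → Fin d → ℕ}
    {k l i : Fin d} {Nk Nl : ℕ} (hk : ∀ᶠ n in f, x n k ≤ Nk) (hl : ∀ᶠ n in f, x n l ≤ Nl)
    (hi : Tendsto (fun n => x n i) f atTop) :
    Tendsto (fun n => monN (x n) (fun j => (if j = k then 1 else 0) + (if j = l then 1 else 0)) /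
      monN (x n) (fun j => if j = i then 1 else 0)) f (𝓝 0) := by
  simp only [monN_binary, monN_unary]
  have hden : Tendsto (fun n => ((max (x n i) 1 : ℕ) : ℝ)) f atTop :=
    tendsto_natCast_atTop_atTop.comp (tendsto_atTop_mono (fun n => le_max_left _ _) hi)
  refine tendsto_bdd_div_atTop_nhds_zero (b := 0) (B := ((max Nk 1 * max Nl 1 : ℕ) : ℝ))
    (Eventually.of_forall fun n => by positivity) ?_ hden
  filter_upwards [hk, hl] with n hnk hnl
  exact_mod_cast Nat.mul_le_mul (max_le_max_right 1 hnk) (max_le_max_right 1 hnl)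

end Monomials

namespace Tier1

variable {d : ℕ} {C : Finset (Fin d → ℕ)} {x : ℕ → Fin d → ℕ}

lemma congr' {y z : Fin d → ℕ} (h : Tier1 C x y)
    (he : ∀ᶠ n in atTop, monN (x n) y = monN (x n) z) : Tier1 C x z := by
  intro y' hy'
  obtain ⟨L, hL, ht⟩ := h y' hy'
  exact ⟨L, hL, ht.congr' (he.mono fun n hn => by rw [hn])⟩

lemma not_tendsto_div_zero {y y' : Fin d → ℕ} (h : Tier1 C x y) (hy' : y' ∈ C) :
    ¬ Tendsto (fun n => monN (x n) y / monN (x n) y') atTop (𝓝 0) := by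
  intro h0
  obtain ⟨L, hL, ht⟩ := h y' hy'
  have : L = 0 := tendsto_nhds_unique ht (by simpa using ENNReal.tendsto_ofReal h0)
  exact hL.ne' this

lemma binary_comm {k l : Fin d}
    (h : Tier1 C x (fun j => (if j = k then 1 else 0) + (if j = l then 1 else 0))) :
    Tier1 C x (fun j => (if j = l then 1 else 0) + (if j = k then 1 else 0)) := by
  simpa only [add_comm] using h

lemma unary_of_binary {k l : Fin d}
    (h : Tier1 C x (fun j => (if j = k then 1 else 0) + (if j = l then 1 else 0)))
    (hk : ∀ᶠ n in atTop, x n k = 0) : Tier1 C x (fun j => if j = l then 1 else 0) := by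
  refine h.congr' (hk.mono fun n hn => ?_)
  rw [monN_binary, monN_unary, hn]
  simp

end Tier1

theorem binary_tier_one_coordinates_pos_general (d : ℕ) (C : Finset (Fin d → ℕ))
    (k l : Fin d)
    (hunary : ∀ i : Fin d, (fun j => if j = i then 1 else 0) ∈ C)
    (x : ℕ → Fin d → ℕ) (L : Fin d → ℝ≥0∞)
    (hLim : ∀ i, Tendsto (fun n => ((x n i : ℕ) : ℝ≥0∞)) atTop (𝓝 (L i)))
    (hinf : ∃ i, Tendsto (fun n => x n i) atTop atTop)
    (hbin : Tier1 C x
      (fun j => (if j = k then 1 else 0) + (if j = l then 1 else 0)))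
    (hnouni : ∀ i : Fin d, ¬ Tier1 C x (fun j => if j = i then 1 else 0)) :
    0 < L k ∧ 0 < L l ∧ (L k = ⊤ ∨ L l = ⊤) := by
  have hk : L k ≠ 0 := fun h0 => hnouni l <|
    hbin.unary_of_binary (eventually_eq_zero_of_tendsto_natCast_zero (h0 ▸ hLim k))
  have hl : L l ≠ 0 := fun h0 => hnouni k <|
    hbin.binary_comm.unary_of_binary (eventually_eq_zero_of_tendsto_natCast_zero (h0 ▸ hLim l))
  refine ⟨pos_iff_ne_zero.2 hk, pos_iff_ne_zero.2 hl, ?_⟩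
  by_contra! hfin
  obtain ⟨i, hi⟩ := hinf
  obtain ⟨Nk, hNk⟩ := exists_eventually_le_of_tendsto_natCast (hLim k) hfin.1
  obtain ⟨Nl, hNl⟩ := exists_eventually_le_of_tendsto_natCast (hLim l) hfin.2
  exact hbin.not_tendsto_div_zero (hunary i) (tendsto_monN_binary_div_unary_zero hNk hNl hi)

/-- if the binary complex `S_k + S_ℓ` (`k ≠ ℓ`) is in tier 1 along a
D-type tier sequence while no unary complex is in tier 1, then both `x_{n,k}` and
`x_{n,ℓ}` have positive limits, at least one of which is infinite. -/
theorem binary_tier_one_coordinates_pos (d : ℕ) (hd : 1 ≤ d) (C : Finset (Fin d → ℕ))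
    (k l : Fin d) (hkl : k ≠ l)
    (hunary : ∀ i : Fin d, (fun j => if j = i then 1 else 0) ∈ C)
    (hbinC : (fun j => (if j = k then 1 else 0) + (if j = l then 1 else 0) : Fin d → ℕ) ∈ C)
    (x : ℕ → Fin d → ℕ) (L : Fin d → ℝ≥0∞)
    (hLim : ∀ i, Tendsto (fun n => ((x n i : ℕ) : ℝ≥0∞)) atTop (𝓝 (L i)))
    (hinf : ∃ i, Tendsto (fun n => x n i) atTop atTop)
    (hRatio : ∀ y ∈ C, ∀ y' ∈ C, ∃ M : ℝ≥0∞,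
      Tendsto (fun n => ENNReal.ofReal (monN (x n) y / monN (x n) y')) atTop (𝓝 M))
    (hbin : Tier1 C x
      (fun j => (if j = k then 1 else 0) + (if j = l then 1 else 0)))
    (hnouni : ∀ i : Fin d, ¬ Tier1 C x (fun j => if j = i then 1 else 0)) :
    0 < L k ∧ 0 < L l ∧ (L k = ⊤ ∨ L l = ⊤) :=
  binary_tier_one_coordinates_pos_general d C k l hunary x L hLim hinf hbin hnouni
end

section
/- Let (S,C,R) be a reaction network with species S_1,…,S_d such that each species has an outflow reaction S_i → ∅ and a subset of inflow reactions ∅ → S_i, and suppose there is a w ∈ R_{>0}^d with w·(y'−y) = 0 for every non-flow reaction y → y'. Then the generator A of the mass-action Markov chain applied to the linear function W(x) = w·x satisfies A W(x) ≤ −a W(x) + b for all x ∈ Z_{\ge 0}^d, where a = min_i κ_{S_i→∅} > 0 and b = Σ_{i∈I} κ_{∅→S_i} w_i. -/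
open Filter Topology Finset Real

/-! Conservation makes every non-flow reaction contribute zero drift to `W(x) = w·x`; the
inflows contribute exactly `b`, and the outflows contribute `-∑ κ_{S_i→∅} w_i x_i`, which is
at most `-a W(x)` because `w_i x_i ≥ 0`. -/

theorem Finset.inf'_mul_sum_le_sum_mul {ι α : Type*} [Semiring α] [LinearOrder α]
    [IsOrderedRing α] (s : Finset ι) (hs : s.Nonempty) (f g : ι → α)
    (hg : ∀ i ∈ s, 0 ≤ g i) :
    s.inf' hs f * ∑ i ∈ s, g i ≤ ∑ i ∈ s, f i * g i := by
  rw [Finset.mul_sum]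
  exact Finset.sum_le_sum fun i hi =>
    mul_le_mul_of_nonneg_right (Finset.inf'_le f hi) (hg i hi)

theorem linear_lyapunov_drift_general (d : ℕ) [NeZero d]
    (R : Finset ((Fin d → ℕ) × (Fin d → ℕ)))
    (κr : (Fin d → ℕ) × (Fin d → ℕ) → ℝ)
    (κout : Fin d → ℝ)
    (I : Finset (Fin d)) (κin : Fin d → ℝ)
    (w : Fin d → ℝ) (hw : ∀ i, 0 < w i)
    (hcons : ∀ r ∈ R, ∑ j, w j * ((r.2 j : ℝ) - (r.1 j : ℝ)) = 0)
    (x : Fin d → ℕ) :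
    (∑ r ∈ R, (κr r * ∏ j, ((x j).descFactorial (r.1 j) : ℝ)) *
        (∑ j, w j * ((r.2 j : ℝ) - (r.1 j : ℝ))))
      + (∑ i, κout i * (x i : ℝ) * (-(w i)))
      + (∑ i ∈ I, κin i * (w i)) ≤
    -(Finset.univ.inf' Finset.univ_nonempty κout) * (∑ i, w i * (x i : ℝ))
      + ∑ i ∈ I, κin i * (w i) := by
  have reactions_vanish :
      ∑ r ∈ R, (κr r * ∏ j, ((x j).descFactorial (r.1 j) : ℝ)) *
        (∑ j, w j * ((r.2 j : ℝ) - (r.1 j : ℝ))) = 0 :=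
    Finset.sum_eq_zero fun r hr => by rw [hcons r hr, mul_zero]
  have outflow_eq : ∑ i, κout i * (x i : ℝ) * (-(w i)) = -∑ i, κout i * (w i * x i) := by
    rw [← Finset.sum_neg_distrib]
    exact Finset.sum_congr rfl fun i _ => by ring
  have outflow_bound := Finset.univ.inf'_mul_sum_le_sum_mul Finset.univ_nonempty κout
    (fun i => w i * (x i : ℝ)) fun i _ => mul_nonneg (hw i).le (Nat.cast_nonneg _)
  rw [reactions_vanish, outflow_eq]
  linarith

/-- for an open-ish network (all outflows, some inflows) with a conserved
positive vector `w` for the non-flow reactions, the generator applied to `W(x) = w·x`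
satisfies `A W(x) ≤ −a W(x) + b` with `a = min_i κ_{S_i→∅}` and `b = Σ_{i∈I} κ_{∅→S_i} w_i`. -/
theorem linear_lyapunov_drift (d : ℕ) [NeZero d]
    (R : Finset ((Fin d → ℕ) × (Fin d → ℕ)))
    (κr : (Fin d → ℕ) × (Fin d → ℕ) → ℝ) (hκr : ∀ r ∈ R, 0 < κr r)
    (κout : Fin d → ℝ) (hκout : ∀ i, 0 < κout i)
    (I : Finset (Fin d)) (κin : Fin d → ℝ) (hκin : ∀ i ∈ I, 0 < κin i)
    (w : Fin d → ℝ) (hw : ∀ i, 0 < w i)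
    (hcons : ∀ r ∈ R, ∑ j, w j * ((r.2 j : ℝ) - (r.1 j : ℝ)) = 0)
    (x : Fin d → ℕ) :
    (∑ r ∈ R, (κr r * ∏ j, ((x j).descFactorial (r.1 j) : ℝ)) *
        (∑ j, w j * ((r.2 j : ℝ) - (r.1 j : ℝ))))
      + (∑ i, κout i * (x i : ℝ) * (-(w i)))
      + (∑ i ∈ I, κin i * (w i)) ≤
    -(Finset.univ.inf' Finset.univ_nonempty κout) * (∑ i, w i * (x i : ℝ))
      + ∑ i ∈ I, κin i * (w i) :=
  linear_lyapunov_drift_general d R κr κout I κin w hw hcons x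
end

section
/- Let (S,C,R) be a binary reaction network (all complexes y satisfy ‖y‖₁ ≤ 2) that is double-full (2S_i ∈ C for every species S_i). Then along any D-type tier sequence {x_n}, some double complex 2S_i belongs to tier 1; i.e., there exists i with lim_n x_{n,i} = ∞ and lim_n (x_n∨1)^{2e_i}/(x_n∨1)^{y'} > 0 for every complex y' ∈ C. -/
/-!
Pick a coordinate `i` at which `x_n` is maximal for infinitely many `n`. Each ratio
`(x_j ∨ 1)² / (x_i ∨ 1)²` converges and is `≤ 1` infinitely often, so its limit is `≤ 1` and
eventually `x_j ∨ 1 ≤ 2 (x_i ∨ 1)` for all `j`. Hence `x_i → ∞` along with the coordinate that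
does, and every monomial of degree `≤ 2` is eventually at most `4 (x_i ∨ 1)²`, so the ratio of
`(x ∨ 1)^{2e_i}` to any complex stays above `1/4`.
-/

open Filter Topology Finset Real
open scoped ENNReal

section Monomial

variable {d : ℕ} (x : Fin d → ℕ)

lemma monN_pos (y : Fin d → ℕ) : 0 < monN x y :=
  Finset.prod_pos fun i _ => pow_pos (by positivity) _

lemma monN_double (i : Fin d) :
    monN x (fun j => if j = i then 2 else 0) = ((max (x i) 1 : ℕ) : ℝ) ^ 2 := by
  rw [monN, Finset.prod_eq_single i] <;> simp +contextual

lemma monN_le_pow {y : Fin d → ℕ} {k : ℕ} {c : ℝ} (hc : 1 ≤ c) (hy : ∑ j, y j ≤ k)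
    (hx : ∀ j, ((max (x j) 1 : ℕ) : ℝ) ≤ c) : monN x y ≤ c ^ k :=
  calc monN x y ≤ ∏ j, c ^ y j :=
        Finset.prod_le_prod (fun j _ => by positivity)
          (fun j _ => pow_le_pow_left₀ (by positivity) (hx j) _)
    _ = c ^ ∑ j, y j := Finset.prod_pow_eq_pow_sum _ _ _
    _ ≤ c ^ k := pow_le_pow_right₀ hc hy

end Monomial

lemma exists_frequently_forall_le {ι α β : Type*} [Finite α] [Nonempty α] [LinearOrder β]
    {l : Filter ι} [l.NeBot] (f : ι → α → β) :
    ∃ i, ∃ᶠ n in l, ∀ j, f n j ≤ f n i := by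
  by_contra! h
  obtain ⟨n, hn⟩ := (eventually_all.2 h).exists
  obtain ⟨i, hi⟩ := Finite.exists_max (f n)
  obtain ⟨j, hj⟩ := hn i
  exact (hi j).not_gt hj

lemma Filter.Tendsto.eventually_lt_of_frequently_le {ι α : Type*} [TopologicalSpace α]
    [LinearOrder α] [OrderClosedTopology α] {l : Filter ι} {f : ι → α} {L a b : α}
    (hf : Tendsto f l (𝓝 L)) (hfreq : ∃ᶠ n in l, f n ≤ a) (hab : a < b) :
    ∀ᶠ n in l, f n < b :=
  hf.eventually_lt_const ((le_of_tendsto_of_frequently hf hfreq).trans_lt hab)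

lemma eventually_max_one_le_two_mul {ι : Type*} {l : Filter ι} {d : ℕ} {x : ι → Fin d → ℕ}
    {i j : Fin d} {L : ℝ≥0∞}
    (hL : Tendsto (fun n => ENNReal.ofReal (monN (x n) (fun k => if k = j then 2 else 0) /
      monN (x n) (fun k => if k = i then 2 else 0))) l (𝓝 L))
    (hfreq : ∃ᶠ n in l, x n j ≤ x n i) :
    ∀ᶠ n in l, max (x n j) 1 ≤ 2 * max (x n i) 1 := by
  simp only [monN_double] at hL
  have hle_one : ∃ᶠ n in l, ENNReal.ofReal
      (((max (x n j) 1 : ℕ) : ℝ) ^ 2 / ((max (x n i) 1 : ℕ) : ℝ) ^ 2) ≤ 1 := by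
    refine hfreq.mono fun n hn => ENNReal.ofReal_le_one.2 ?_
    rw [div_le_one (by positivity)]
    gcongr
  filter_upwards [hL.eventually_lt_of_frequently_le hle_one ENNReal.one_lt_two] with n hn
  rw [ENNReal.ofReal_lt_ofNat, div_lt_iff₀ (by positivity)] at hn
  have hsq : ((max (x n j) 1 : ℕ) : ℝ) ^ 2 < ((2 * max (x n i) 1 : ℕ) : ℝ) ^ 2 := by
    rw [Nat.cast_mul, Nat.cast_two]
    nlinarith [show (1 : ℝ) ≤ ((max (x n i) 1 : ℕ) : ℝ) by exact_mod_cast le_max_right _ _]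
  exact_mod_cast (lt_of_pow_lt_pow_left₀ 2 (by positivity) hsq).le

theorem double_complex_in_tier_one_general (d : ℕ) (C : Finset (Fin d → ℕ))
    (hbinary : ∀ y ∈ C, ∑ j, y j ≤ 2)
    (hfull : ∀ i : Fin d, (fun j => if j = i then 2 else 0 : Fin d → ℕ) ∈ C)
    (x : ℕ → Fin d → ℕ)
    (hinf : ∃ j, Tendsto (fun n => x n j) atTop atTop)
    (hRatio : ∀ y ∈ C, ∀ y' ∈ C, ∃ L : ℝ≥0∞,
      Tendsto (fun n => ENNReal.ofReal (monN (x n) y / monN (x n) y')) atTop (𝓝 L)) :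
    ∃ i : Fin d, Tendsto (fun n => x n i) atTop atTop ∧
      ∀ y' ∈ C, ∃ L : ℝ≥0∞, 0 < L ∧
        Tendsto
          (fun n =>
            ENNReal.ofReal (monN (x n) (fun j => if j = i then 2 else 0) / monN (x n) y'))
          atTop (𝓝 L) := by
  obtain ⟨j₀, hj₀⟩ := hinf
  have : Nonempty (Fin d) := ⟨j₀⟩
  obtain ⟨i, hi⟩ := exists_frequently_forall_le (l := atTop) (α := Fin d) x
  have hdom : ∀ᶠ n in atTop, ∀ j, max (x n j) 1 ≤ 2 * max (x n i) 1 :=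
    eventually_all.2 fun j => eventually_max_one_le_two_mul
      (hRatio _ (hfull j) _ (hfull i)).choose_spec (hi.mono fun n hn => hn j)
  refine ⟨i, tendsto_atTop.2 fun b => ?_, fun y' hy' => ?_⟩
  · filter_upwards [hdom, tendsto_atTop.1 hj₀ (2 * b + 2)] with n hn hb
    have := hn j₀
    omega
  obtain ⟨L, hL⟩ := hRatio _ (hfull i) y' hy'
  refine ⟨L, lt_of_lt_of_le (by norm_num : (0 : ℝ≥0∞) < ENNReal.ofReal (1 / 4)) ?_, hL⟩
  refine ge_of_tendsto hL (hdom.mono fun n hn => ENNReal.ofReal_le_ofReal ?_)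
  have hmi : (1 : ℝ) ≤ ((max (x n i) 1 : ℕ) : ℝ) := by exact_mod_cast le_max_right _ _
  have hy'_le : monN (x n) y' ≤ (2 * ((max (x n i) 1 : ℕ) : ℝ)) ^ 2 :=
    monN_le_pow _ (by linarith) (hbinary y' hy') fun j => by exact_mod_cast hn j
  rw [monN_double, le_div_iff₀ (monN_pos _ _)]
  nlinarith

/-- part (ii) of Lemma 8 of the paper: for a binary double-full
network, along any D-type tier sequence some double complex `2S_i` is in tier 1. -/
theorem double_complex_in_tier_one (d : ℕ) (hd : 1 ≤ d) (C : Finset (Fin d → ℕ))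
    (hbinary : ∀ y ∈ C, ∑ j, y j ≤ 2)
    (hfull : ∀ i : Fin d, (fun j => if j = i then 2 else 0 : Fin d → ℕ) ∈ C)
    (x : ℕ → Fin d → ℕ)
    (hLim : ∀ j, ∃ L : ℝ≥0∞, Tendsto (fun n => ((x n j : ℕ) : ℝ≥0∞)) atTop (𝓝 L))
    (hinf : ∃ j, Tendsto (fun n => x n j) atTop atTop)
    (hRatio : ∀ y ∈ C, ∀ y' ∈ C, ∃ L : ℝ≥0∞,
      Tendsto (fun n => ENNReal.ofReal (monN (x n) y / monN (x n) y')) atTop (𝓝 L)) :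
    ∃ i : Fin d, Tendsto (fun n => x n i) atTop atTop ∧
      ∀ y' ∈ C, ∃ L : ℝ≥0∞, 0 < L ∧
        Tendsto
          (fun n =>
            ENNReal.ofReal (monN (x n) (fun j => if j = i then 2 else 0) / monN (x n) y'))
          atTop (𝓝 L) :=
  double_complex_in_tier_one_general d C hbinary hfull x hinf hRatio
end
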